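/- Let m ≥ 2 be an integer such that Z_m is not a field (i.e., m is not prime), and let T = Tr(Z_m). Then the commuting graph Γ(T) is connected and its diameter is 3. -/

import Mathlib

open Matrix

/-- The ring of 2×2 upper triangular matrices over `R`. -/
def Tri (R : Type*) [CommRing R] : Subring (Matrix (Fin 2) (Fin 2) R) where
  carrier := {A | A 1 0 = 0}
  mul_mem' := by
    intro a b ha hb
    simp only [Set.mem_setOf_eq] at *
    simp [Matrix.mul_apply, Fin.sum_univ_two, ha, hb]
  one_mem' := by simp [Matrix.one_apply]
  add_mem' := by
    intro a b ha hb
    simp_all [Matrix.add_apply]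
  zero_mem' := by simp
  neg_mem' := by
    intro a ha
    simp_all

/-- The commuting graph of a ring `T`: vertices are the noncentral elements,
two distinct vertices are adjacent iff they commute. -/
def commGraph (T : Type*) [Ring T] : SimpleGraph {x : T // x ∉ Set.center T} where
  Adj a b := a ≠ b ∧ (a : T) * b = b * a
  symm := by
    constructor
    rintro a b ⟨h1, h2⟩
    exact ⟨h1.symm, h2.symm⟩
  loopless := by constructor; rintro a ⟨h, _⟩; exact h rfl

/-!
Writing `A = !![a, b; 0, d]` as `d • 1 + !![a - d, b; 0, 0]`, an element of `Tri R` is, for the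
purposes of commuting, just the vector `(a - d, b) ∈ R²`: it vanishes exactly on the centre, and
two elements commute iff their vectors have zero determinant (`wedge`). Fix `p, q ≠ 0` with
`p * q = 0`. Two vectors whose first coordinates are non-zero-divisors are joined through their
multiples by `p` and by `q`. Otherwise the first coordinate `δ` is killed by some `s ≠ 0`, so the
vector is joined to `(0, s)`; all the `(0, s)` are pairwise joined, and a vector with regular first
coordinate reaches `(0, s)` through its multiple by any `t ≠ 0` with `t * s = 0`, which exists
after choosing `s` well. Finally `(1, 0)` and `(1, 1)` are not joined and have no nonzero common
neighbour, so the diameter is exactly three.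
-/

open scoped nonZeroDivisors

def wedge {R : Type*} [CommRing R] (x y : R × R) : R := x.1 * y.2 - x.2 * y.1

namespace Tri

variable {R : Type*} [CommRing R]

def offScalar (A : Tri R) : R × R := (A.1 0 0 - A.1 1 1, A.1 0 1)

def ofPair (x : R × R) : Tri R := ⟨!![x.1, x.2; 0, 0], rfl⟩

@[simp] lemma offScalar_ofPair (x : R × R) : offScalar (ofPair x) = x := by
  simp [offScalar, ofPair]

lemma commute_iff {A B : Tri R} : Commute A B ↔ wedge (offScalar A) (offScalar B) = 0 := by
  have hA : A.1 1 0 = 0 := A.2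
  have hB : B.1 1 0 = 0 := B.2
  rw [Commute, SemiconjBy, Subtype.ext_iff, Subring.coe_mul, Subring.coe_mul, ← Matrix.ext_iff]
  simp only [Fin.forall_fin_two, Matrix.mul_apply, Fin.sum_univ_two, hA, hB, wedge, offScalar]
  constructor
  · rintro ⟨⟨-, h⟩, -⟩
    linear_combination h
  · intro h
    exact ⟨⟨by ring, by linear_combination h⟩, by ring, by ring⟩

lemma mem_center_iff {A : Tri R} : A ∈ Set.center (Tri R) ↔ offScalar A = 0 := by
  rw [Semigroup.mem_center_iff]
  refine ⟨fun h => ?_, fun h B => (commute_iff.2 (by simp [h, wedge])).eq⟩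
  have h₁ := commute_iff.1 (h (ofPair (1, 0)))
  have h₂ := commute_iff.1 (h (ofPair (0, 1)))
  simp only [offScalar_ofPair, wedge] at h₁ h₂
  exact Prod.ext (by simpa using h₂) (by simpa using h₁)

end Tri

section Wedge

variable {R : Type*} [CommRing R]

lemma wedge_eq_zero_comm {x y : R × R} : wedge x y = 0 ↔ wedge y x = 0 := by
  unfold wedge
  constructor <;> intro h <;> linear_combination -h

lemma wedge_smul_self (t : R) (x : R × R) : wedge x (t • x) = 0 := by
  simp only [wedge, Prod.smul_fst, Prod.smul_snd, smul_eq_mul]; ring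

lemma wedge_smul_smul (s t : R) (x y : R × R) : wedge (s • x) (t • y) = s * t * wedge x y := by
  simp only [wedge, Prod.smul_fst, Prod.smul_snd, smul_eq_mul]; ring

lemma smul_ne_zero_of_fst_mem_nonZeroDivisors {x : R × R} (hx : x.1 ∈ R⁰) {t : R} (ht : t ≠ 0) :
    t • x ≠ 0 :=
  fun h => ht ((mul_right_mem_nonZeroDivisors_eq_zero_iff hx).1 (congrArg Prod.fst h))

lemma exists_annihilator_of_notMem_nonZeroDivisors {p q : R} (hp : p ≠ 0) (hq : q ≠ 0)
    (hpq : p * q = 0) {a : R} (ha : a ∉ R⁰) :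
    ∃ s t : R, s ≠ 0 ∧ t ≠ 0 ∧ t * s = 0 ∧ s * a = 0 := by
  by_cases ha₀ : a = 0
  · exact ⟨q, p, hq, hp, hpq, by simp [ha₀]⟩
  · obtain ⟨s, hsa, hs⟩ := notMem_nonZeroDivisors_iff_right.1 ha
    exact ⟨s, a, hs, ha₀, by rw [mul_comm, hsa], hsa⟩

lemma exists_wedge_path_of_fst_mem_nonZeroDivisors {p q : R} (hp : p ≠ 0) (hq : q ≠ 0)
    (hpq : p * q = 0) {x : R × R} (hx : x.1 ∈ R⁰) (y : R × R) :
    ∃ z w : R × R, z ≠ 0 ∧ w ≠ 0 ∧ wedge x z = 0 ∧ wedge z w = 0 ∧ wedge w y = 0 := by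
  by_cases hy : y.1 ∈ R⁰
  · refine ⟨p • x, q • y, smul_ne_zero_of_fst_mem_nonZeroDivisors hx hp,
      smul_ne_zero_of_fst_mem_nonZeroDivisors hy hq, wedge_smul_self p x, ?_, ?_⟩
    · rw [wedge_smul_smul, hpq, zero_mul]
    · exact wedge_eq_zero_comm.1 (wedge_smul_self q y)
  · obtain ⟨s, t, hs, ht, hts, hsy⟩ := exists_annihilator_of_notMem_nonZeroDivisors hp hq hpq hy
    refine ⟨t • x, (0, s), smul_ne_zero_of_fst_mem_nonZeroDivisors hx ht, by simp [hs],
      wedge_smul_self t x, ?_, ?_⟩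
    · simp only [wedge, Prod.smul_fst, Prod.smul_snd, smul_eq_mul]
      linear_combination x.1 * hts
    · simp only [wedge]
      linear_combination -hsy

lemma exists_wedge_path {p q : R} (hp : p ≠ 0) (hq : q ≠ 0) (hpq : p * q = 0) (x y : R × R) :
    ∃ z w : R × R, z ≠ 0 ∧ w ≠ 0 ∧ wedge x z = 0 ∧ wedge z w = 0 ∧ wedge w y = 0 := by
  by_cases hx : x.1 ∈ R⁰
  · exact exists_wedge_path_of_fst_mem_nonZeroDivisors hp hq hpq hx y
  by_cases hy : y.1 ∈ R⁰
  · obtain ⟨z, w, hz, hw, hyz, hzw, hwx⟩ :=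
      exists_wedge_path_of_fst_mem_nonZeroDivisors hp hq hpq hy x
    exact ⟨w, z, hw, hz, wedge_eq_zero_comm.1 hwx, wedge_eq_zero_comm.1 hzw,
      wedge_eq_zero_comm.1 hyz⟩
  obtain ⟨s, hsx, hs⟩ := notMem_nonZeroDivisors_iff_right.1 hx
  obtain ⟨s', hsy, hs'⟩ := notMem_nonZeroDivisors_iff_right.1 hy
  refine ⟨(0, s), (0, s'), by simp [hs], by simp [hs'], ?_, by simp [wedge], ?_⟩
  · simp only [wedge]
    linear_combination hsx
  · simp only [wedge]
    linear_combination -hsy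

end Wedge

lemma commGraph_edist_le_one {T : Type*} [Ring T] {u v : {x : T // x ∉ Set.center T}}
    (h : Commute (u : T) v) : (commGraph T).edist u v ≤ 1 := by
  rw [SimpleGraph.edist_le_one_iff_adj_or_eq]
  by_cases huv : u = v
  · exact Or.inr huv
  · exact Or.inl ⟨huv, h⟩

section TriGraph

variable {R : Type*} [CommRing R]

lemma Tri.ofPair_notMem_center {x : R × R} (hx : x ≠ 0) : Tri.ofPair x ∉ Set.center (Tri R) := by
  rwa [Tri.mem_center_iff, Tri.offScalar_ofPair]

lemma commGraph_tri_edist_le_three {p q : R} (hp : p ≠ 0) (hq : q ≠ 0) (hpq : p * q = 0)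
    (u v : {A : Tri R // A ∉ Set.center (Tri R)}) : (commGraph (Tri R)).edist u v ≤ 3 := by
  obtain ⟨z, w, hz, hw, huz, hzw, hwv⟩ :=
    exists_wedge_path hp hq hpq (Tri.offScalar u.1) (Tri.offScalar v.1)
  let z' : {A : Tri R // A ∉ Set.center (Tri R)} := ⟨Tri.ofPair z, Tri.ofPair_notMem_center hz⟩
  let w' : {A : Tri R // A ∉ Set.center (Tri R)} := ⟨Tri.ofPair w, Tri.ofPair_notMem_center hw⟩
  calc (commGraph (Tri R)).edist u v
      ≤ (commGraph (Tri R)).edist u z' + (commGraph (Tri R)).edist z' v :=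
        SimpleGraph.edist_triangle
    _ ≤ (commGraph (Tri R)).edist u z' +
          ((commGraph (Tri R)).edist z' w' + (commGraph (Tri R)).edist w' v) := by
        gcongr; exact SimpleGraph.edist_triangle
    _ ≤ 1 + (1 + 1) := by
        gcongr <;> apply commGraph_edist_le_one <;> rw [Tri.commute_iff] <;> simpa [z', w']
    _ = 3 := by norm_num

lemma commGraph_tri_exists_three_le_edist [Nontrivial R] :
    ∃ u v, 3 ≤ (commGraph (Tri R)).edist u v := by
  let u : {A : Tri R // A ∉ Set.center (Tri R)} :=
    ⟨Tri.ofPair (1, 0), Tri.ofPair_notMem_center (by simp)⟩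
  let v : {A : Tri R // A ∉ Set.center (Tri R)} :=
    ⟨Tri.ofPair (1, 1), Tri.ofPair_notMem_center (by simp)⟩
  have huv : ¬Commute (u : Tri R) v := by simp [Tri.commute_iff, u, v, wedge]
  have hne : u ≠ v := fun h => huv (h ▸ Commute.refl _)
  have hadj : ¬(commGraph (Tri R)).Adj u v := fun h => huv h.2
  have hcommon : (commGraph (Tri R)).commonNeighbors u v = ∅ := by
    refine Set.eq_empty_iff_forall_notMem.2 fun w hw => w.2 (Tri.mem_center_iff.2 ?_)
    obtain ⟨⟨-, huw⟩, ⟨-, hvw⟩⟩ := (SimpleGraph.mem_commonNeighbors _).1 hw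
    have h₁ := Tri.commute_iff.1 huw
    have h₂ := Tri.commute_iff.1 hvw
    simp only [u, v, Tri.offScalar_ofPair, wedge] at h₁ h₂
    exact Prod.ext (by rw [Prod.fst_zero]; linear_combination h₁ - h₂)
      (by rw [Prod.snd_zero]; linear_combination h₁)
  exact ⟨u, v, Order.add_one_le_of_lt (SimpleGraph.two_lt_edist_iff.2 ⟨hne, hadj, hcommon⟩)⟩

theorem commGraph_tri_connected_and_diam_eq_three (h : ¬NoZeroDivisors R) :
    (commGraph (Tri R)).Connected ∧ (commGraph (Tri R)).diam = 3 := by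
  obtain ⟨p, q, hpq, hp, hq⟩ : ∃ p q : R, p * q = 0 ∧ p ≠ 0 ∧ q ≠ 0 := by
    simpa [noZeroDivisors_iff] using h
  have : Nontrivial R := nontrivial_of_ne p 0 hp
  obtain ⟨u, v, huv⟩ := commGraph_tri_exists_three_le_edist (R := R)
  have hediam : (commGraph (Tri R)).ediam = 3 :=
    le_antisymm (SimpleGraph.ediam_le_of_edist_le (commGraph_tri_edist_le_three hp hq hpq))
      (huv.trans SimpleGraph.edist_le_ediam)
  have : Nonempty {A : Tri R // A ∉ Set.center (Tri R)} := ⟨u⟩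
  exact ⟨SimpleGraph.connected_of_ediam_ne_top (by simp [hediam]),
    by simp [SimpleGraph.diam, hediam]⟩

end TriGraph

/-- Theorem 2.10: if `m ≥ 2` is not prime (so `ℤ/m` is not a field), the
commuting graph of `Tri (ZMod m)` is connected and has diameter `3`. -/
theorem commGraph_tri_zmod_connected_diam (m : ℕ) (hm : 2 ≤ m) (h : ¬ m.Prime) :
    (commGraph (Tri (ZMod m))).Connected ∧
      (commGraph (Tri (ZMod m))).diam = 3 :=
  commGraph_tri_connected_and_diam_eq_three fun _ =>
    h (CharP.char_is_prime_of_two_le (ZMod m) m hm)
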